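/- For any tree T with n vertices and any star S with at least n + 1 leaves, gm(S □ T) ≥ ⌊√(2n)⌋. -/

import Mathlib

open SimpleGraph

/-- `G` is a minor of `H`: there is a model of `G` in `H`, i.e. a family of pairwise
disjoint branch sets, each inducing a connected subgraph of `H`, with an edge of `H`
between the branch sets of any two adjacent vertices of `G`. -/
def SimpleGraph.IsMinorOf {α : Type*} {β : Type*} (G : SimpleGraph α) (H : SimpleGraph β) :
    Prop :=
  ∃ B : α → Set β,
    (∀ x, (H.induce (B x)).Connected) ∧
    (Pairwise fun x y => Disjoint (B x) (B y)) ∧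
    (∀ ⦃x y⦄, G.Adj x y → ∃ a ∈ B x, ∃ b ∈ B y, H.Adj a b)

/-- The strong product of two simple graphs. -/
def strongProd {α β : Type*} (G : SimpleGraph α) (H : SimpleGraph β) :
    SimpleGraph (α × β) where
  Adj a b := (a.1 = b.1 ∧ H.Adj a.2 b.2) ∨ (a.2 = b.2 ∧ G.Adj a.1 b.1) ∨
             (G.Adj a.1 b.1 ∧ H.Adj a.2 b.2)
  symm := by
    refine ⟨?_⟩
    rintro a b (⟨h1, h2⟩ | ⟨h1, h2⟩ | ⟨h1, h2⟩)
    · exact Or.inl ⟨h1.symm, h2.symm⟩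
    · exact Or.inr (Or.inl ⟨h1.symm, h2.symm⟩)
    · exact Or.inr (Or.inr ⟨h1.symm, h2.symm⟩)
  loopless := by
    refine ⟨?_⟩
    rintro a (⟨_, h⟩ | ⟨_, h⟩ | ⟨h, _⟩)
    · exact H.loopless.irrefl _ h
    · exact G.loopless.irrefl _ h
    · exact G.loopless.irrefl _ h

/-- The lexicographic product of two simple graphs. -/
def lexProd {α β : Type*} (G : SimpleGraph α) (H : SimpleGraph β) :
    SimpleGraph (α × β) where
  Adj a b := G.Adj a.1 b.1 ∨ (a.1 = b.1 ∧ H.Adj a.2 b.2)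
  symm := by
    refine ⟨?_⟩
    rintro a b (h | ⟨h1, h2⟩)
    · exact Or.inl h.symm
    · exact Or.inr ⟨h1.symm, h2.symm⟩
  loopless := by
    refine ⟨?_⟩
    rintro a (h | ⟨_, h⟩)
    · exact G.loopless.irrefl _ h
    · exact H.loopless.irrefl _ h

/-- The `k × k` grid graph: vertices `{0,…,k-1}²`, two vertices adjacent iff they differ
by exactly one in exactly one coordinate. -/
def gridGraph (k : ℕ) : SimpleGraph (Fin k × Fin k) :=
  SimpleGraph.fromRel (fun a b =>
    (a.1 = b.1 ∧ a.2.val + 1 = b.2.val) ∨ (a.2 = b.2 ∧ a.1.val + 1 = b.1.val))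

/-- The star with `n` leaves: the root `none` is adjacent to each leaf `some i`. -/
def starGraph (n : ℕ) : SimpleGraph (Option (Fin n)) :=
  SimpleGraph.fromRel (fun a b => a = none ∧ b ≠ none)

/-- The subdivided star `S_{ℓ,p}`: a star with `ℓ` leaves, each edge subdivided `p-1`
times, i.e. a centre `none` with `ℓ` pendant paths `some (i, 0), …, some (i, p-1)`. -/
def subStar (ℓ p : ℕ) : SimpleGraph (Option (Fin ℓ × Fin p)) :=
  SimpleGraph.fromRel (fun a b =>
    (a = none ∧ ∃ (i : Fin ℓ) (j : Fin p), j.val = 0 ∧ b = some (i, j)) ∨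
    (∃ (i : Fin ℓ) (j k : Fin p), a = some (i, j) ∧ b = some (i, k) ∧ j.val + 1 = k.val))

/-- `G` admits a tree-decomposition of width at most `w`: there is a tree `T` (indexed by
`ℕ`) and bags such that every vertex and every edge of `G` lies in some bag, for every
vertex of `G` the set of nodes whose bag contains it induces a non-empty connected
subtree of `T`, and every bag has at most `w + 1` vertices. -/
def HasDecompWidth {V : Type*} (G : SimpleGraph V) (w : ℕ) : Prop :=
  ∃ (T : SimpleGraph ℕ) (bag : ℕ → Finset V),
    T.IsTree ∧
    (∀ v : V, ∃ i, v ∈ bag i) ∧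
    (∀ u v : V, G.Adj u v → ∃ i, u ∈ bag i ∧ v ∈ bag i) ∧
    (∀ v : V, (T.induce {i | v ∈ bag i}).Connected) ∧
    (∀ i, (bag i).card ≤ w + 1)

/-- The treewidth of a finite graph: the minimum width of a tree-decomposition. -/
noncomputable def treewidth {V : Type*} [Fintype V] (G : SimpleGraph V) : ℕ :=
  sInf { w | HasDecompWidth G w }

/-- `gm G`: the maximum `k` such that the `k × k` grid is a minor of `G`. -/
noncomputable def gridMinorNum {V : Type*} (G : SimpleGraph V) : ℕ :=
  sSup { k | (gridGraph k).IsMinorOf G }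

/-- A walk in a tree rooted at `r` is vertical if it contains at most one vertex of
each depth (distance from the root). -/
def IsVertical {V : Type*} (T : SimpleGraph V) (r : V) {u w : V} (p : T.Walk u w) : Prop :=
  ∀ x ∈ p.support, ∀ y ∈ p.support, T.dist r x = T.dist r y → x = y

/-- In the tree `T` rooted at `r`, `v` is an ancestor of `w`: `v` lies on the unique
path from `r` to `w` (in a tree this is equivalent to this distance identity). -/
def Ancestor {V : Type*} (T : SimpleGraph V) (r v w : V) : Prop :=
  T.dist r w = T.dist r v + T.dist v w

/-- Two vertices of a rooted tree are related if one is an ancestor of the other. -/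
def Related {V : Type*} (T : SimpleGraph V) (r v w : V) : Prop :=
  Ancestor T r v w ∨ Ancestor T r w v

/-- The height of `v` in the tree `T` rooted at `r`: the maximum order (number of
vertices) of a vertical path whose upper (minimum-depth) endpoint is `v`. -/
noncomputable def height {V : Type*} (T : SimpleGraph V) (r v : V) : ℕ :=
  sSup { n | ∃ (w : V) (p : T.Walk v w), p.IsPath ∧ IsVertical T r p ∧
      (∀ x ∈ p.support, T.dist r v ≤ T.dist r x) ∧ p.support.length = n }

/-- The radius of a finite graph: the least `e` such that some vertex is within
distance `e` of every vertex. -/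
noncomputable def graphRadius {V : Type*} [Fintype V] (T : SimpleGraph V) : ℕ :=
  sInf { e | ∃ v, ∀ w, T.dist v w ≤ e }

/-!
Colour the cells of the `k × k` grid by the parity of `x + y`; adjacent cells get different
colours. Send each even cell to a single vertex `(root, t)` of `S □ T`, and each odd cell to a
whole fibre `{leaf} × V(T)`, which is connected because `T` is. The root is adjacent to every
leaf, so the vertex `(root, t)` touches every fibre, and any bipartite graph whose two colour
classes fit into `V(T)` and into the leaves is a minor of `S □ T`. Reading the grid in
boustrophedon order makes the parity of the position of a cell equal to its colour, so halving
the position fits both colour classes into `n` slots as soon as `k² ≤ 2n`.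
-/

namespace SimpleGraph

variable {α β : Type*}

lemma connected_induce_singleton (G : SimpleGraph α) (a : α) : (G.induce {a}).Connected := by
  rw [induce_singleton_eq_top]
  exact connected_top

lemma connected_induce_boxProd_fiber (G : SimpleGraph α) {H : SimpleGraph β} (hH : H.Connected)
    (a : α) : ((G □ H).induce {p | p.1 = a}).Connected := by
  let f : H →g (G □ H).induce {p | p.1 = a} :=
    ⟨fun b => ⟨(a, b), rfl⟩, fun h => boxProd_adj_right.2 h⟩
  have hf : ∀ p : {p : α × β // p.1 = a}, p = f p.1.2 := fun ⟨⟨_, _⟩, rfl⟩ => rfl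
  refine (connected_iff _).2 ⟨fun p q => ?_, ⟨f hH.nonempty.some⟩⟩
  rw [hf p, hf q]
  exact (hH.preconnected _ _).map f

lemma IsMinorOf.card_le [Fintype α] [Fintype β] {G : SimpleGraph α} {H : SimpleGraph β}
    (h : G.IsMinorOf H) : Fintype.card α ≤ Fintype.card β := by
  obtain ⟨B, hconn, hdisj, -⟩ := h
  have : ∀ a, ∃ p, p ∈ B a := fun a => (hconn a).nonempty.elim fun p => ⟨p.1, p.2⟩
  choose rep hrep using this
  refine Fintype.card_le_of_injective rep fun a b hab => ?_
  by_contra hne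
  exact Set.disjoint_left.1 (hdisj hne) (hrep a) (hab ▸ hrep b)

end SimpleGraph

lemma starGraph_adj_none_some (m : ℕ) (i : Fin m) : (_root_.starGraph m).Adj none (some i) := by
  simp [_root_.starGraph]

theorem isMinorOf_starGraph_boxProd {α β : Type*} {G : SimpleGraph α} (C : G.Coloring Bool)
    {m : ℕ} {T : SimpleGraph β} (hT : T.Connected) (r : α → β) (l : α → Fin m)
    (hr : Set.InjOn r (C.colorClass true)) (hl : Set.InjOn l (C.colorClass false)) :
    G.IsMinorOf (_root_.starGraph m □ T) := by
  refine ⟨fun a => if C a then {(none, r a)} else {p | p.1 = some (l a)}, fun a => ?_,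
    fun a b hab => ?_, fun a b hadj => ?_⟩ <;> dsimp only
  · by_cases ha : C a
    · rw [if_pos ha]
      exact connected_induce_singleton _ _
    · rw [if_neg ha]
      exact connected_induce_boxProd_fiber _ hT _
  · split_ifs with ha hb hb
    · exact Set.disjoint_singleton.2 fun h => hab (hr ha hb (congrArg Prod.snd h))
    · exact Set.disjoint_singleton_left.2 (by simp)
    · exact Set.disjoint_singleton_right.2 (by simp)
    · refine Set.disjoint_left.2 fun p (hpa : p.1 = _) (hpb : p.1 = _) => hab ?_
      exact hl (eq_false_of_ne_true ha) (eq_false_of_ne_true hb)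
        (Option.some_injective _ (hpa.symm.trans hpb))
  · have hne := C.valid hadj
    split_ifs with ha hb hb
    · exact absurd (ha.trans hb.symm) hne
    · exact ⟨_, rfl, (some (l b), r a), rfl, boxProd_adj_left.2 (starGraph_adj_none_some m _)⟩
    · exact ⟨(some (l a), r b), rfl, _, rfl,
        boxProd_adj_left.2 (starGraph_adj_none_some m _).symm⟩
    · exact absurd ((eq_false_of_ne_true ha).trans (eq_false_of_ne_true hb).symm) hne

def snakeIndex (k : ℕ) (c : Fin k × Fin k) : Fin (k * k) :=
  finProdFinEquiv (c.1, if Even c.1.val then c.2 else c.2.rev)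

lemma snakeIndex_injective (k : ℕ) : Function.Injective (snakeIndex k) := by
  rintro ⟨x, y⟩ ⟨x', y'⟩ h
  obtain ⟨rfl, hy⟩ := Prod.ext_iff.1 (finProdFinEquiv.injective h)
  split_ifs at hy
  · exact Prod.ext rfl hy
  · exact Prod.ext rfl (Fin.rev_injective hy)

lemma snakeIndex_mod_two (k : ℕ) (c : Fin k × Fin k) :
    (snakeIndex k c).val % 2 = (c.1.val + c.2.val) % 2 := by
  obtain ⟨⟨x, hx⟩, ⟨y, hy⟩⟩ := c
  simp only [snakeIndex, finProdFinEquiv_apply_val]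
  rcases Nat.even_or_odd' x with ⟨a, rfl | rfl⟩
  · simp only [even_two_mul, if_true, mul_left_comm k 2 a]
    omega
  · simp only [Nat.not_even_two_mul_add_one, if_false, Fin.val_rev, mul_add, mul_one,
      mul_left_comm k 2 a]
    omega

def gridParity (k : ℕ) : (gridGraph k).Coloring Bool :=
  Coloring.mk (fun c => decide ((c.1.val + c.2.val) % 2 = 0)) fun {c d} h => by
    rw [gridGraph, fromRel_adj] at h
    obtain ⟨-, (⟨h₁, h₂⟩ | ⟨h₁, h₂⟩) | (⟨h₁, h₂⟩ | ⟨h₁, h₂⟩)⟩ := h <;>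
      simp only [h₁, ne_eq, decide_eq_decide] <;> omega

lemma injOn_snakeIndex_div_two (k : ℕ) (b : Bool) :
    Set.InjOn (fun c => (snakeIndex k c).val / 2) ((gridParity k).colorClass b) := by
  intro c (hc : decide _ = b) d (hd : decide _ = b) h
  have hcd := hc.trans hd.symm
  simp only [decide_eq_decide] at hcd
  have := snakeIndex_mod_two k c
  have := snakeIndex_mod_two k d
  exact snakeIndex_injective k (Fin.ext (by simp only at h; omega))

theorem gridGraph_isMinorOf_starGraph_boxProd {k n m : ℕ} {T : SimpleGraph (Fin n)}
    (hT : T.Connected) (hk : k * k ≤ 2 * n) (hnm : n ≤ m) :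
    (gridGraph k).IsMinorOf (_root_.starGraph m □ T) := by
  let r : Fin k × Fin k → Fin n := fun c => ⟨(snakeIndex k c).val / 2, by
    have := (snakeIndex k c).isLt
    omega⟩
  refine isMinorOf_starGraph_boxProd (gridParity k) hT r (fun c => Fin.castLE hnm (r c)) ?_ ?_
  · exact fun c hc d hd h => injOn_snakeIndex_div_two k true hc hd (congrArg Fin.val h)
  · exact fun c hc d hd h => injOn_snakeIndex_div_two k false hc hd (congrArg Fin.val h)

lemma le_gridMinorNum {V : Type*} [Fintype V] {G : SimpleGraph V} {k : ℕ}
    (h : (gridGraph k).IsMinorOf G) : k ≤ gridMinorNum G := by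
  refine le_csSup ⟨Fintype.card V, fun j (hj : (gridGraph j).IsMinorOf G) => ?_⟩ h
  calc j ≤ j * j := Nat.le_mul_self j
    _ = Fintype.card (Fin j × Fin j) := by simp
    _ ≤ Fintype.card V := hj.card_le

/-- For any tree `T` with `n` vertices and any star `S` with at least `n + 1` leaves,
`gm(S □ T) ≥ ⌊√(2n)⌋`. -/
theorem stmt16 (n m : ℕ) (T : SimpleGraph (Fin n)) (hT : T.IsTree) (hm : n + 1 ≤ m) :
    Nat.sqrt (2 * n) ≤ gridMinorNum ((_root_.starGraph m).boxProd T) :=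
  le_gridMinorNum <| gridGraph_isMinorOf_starGraph_boxProd hT.connected
    (Nat.sqrt_le (2 * n)) (by omega)
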